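/- arXiv:math/0005258 — 4 statements merged into one kernel-verified Lean document; each statement's English description precedes it below -/
import Mathlib

section
/- Let A be a commutative algebra over an algebraically closed field k of characteristic zero with a locally nilpotent derivation δ such that A is δ-simple. If there exists x ∈ A with δ(x) = 1 and every element of ker δ is algebraic over k, then A = k[x], i.e., every element of A is a polynomial in x with coefficients in k, and δ = d/dx. -/
/-!
For `c ∈ ker δ` and `l ∈ k`, the ideal `(c - l)` is `δ`-stable, so `c - l` is zero or a unit.
Since `k` is algebraically closed, an algebraic `c` is killed by a product of factors `c - l`,
which cannot all be units; hence `ker δ = k`. Then, by induction on the nilpotency index of `a`,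
`δ a = p(x)` and `a - q(x) ∈ ker δ = k` for an antiderivative `q` of `p`.
-/

open Polynomial

theorem Polynomial.derivative_surjective {k : Type*} [Field k] [CharZero k] :
    Function.Surjective (derivative : k[X] →ₗ[k] k[X]) := by
  intro p
  refine ⟨p.sum fun i a => C (a / (i + 1)) * X ^ (i + 1), ?_⟩
  conv_rhs => rw [← p.sum_C_mul_X_pow_eq]
  rw [Polynomial.sum, Polynomial.sum, map_sum]
  refine Finset.sum_congr rfl fun i _ => ?_
  rw [derivative_C_mul_X_pow]
  push_cast
  rw [div_mul_cancel₀ _ (Nat.cast_add_one_ne_zero i)]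

theorem exists_eq_algebraMap_of_isAlgebraic {k A : Type*} [Field k] [IsAlgClosed k] [CommRing A]
    [Nontrivial A] [Algebra k A] {c : A} (hc : IsAlgebraic k c)
    (hunit : ∀ l : k, IsUnit (c - algebraMap k A l) ∨ c - algebraMap k A l = 0) :
    ∃ l : k, c = algebraMap k A l := by
  obtain ⟨p, hp0, hpc⟩ := hc
  by_contra! hne
  have hunit' : ∀ l : k, IsUnit (c - algebraMap k A l) := fun l =>
    (hunit l).resolve_right (sub_ne_zero.mpr (hne l))
  have : IsUnit (aeval c p) := by
    rw [(IsAlgClosed.splits p).eq_prod_roots, map_mul, aeval_C, map_multiset_prod,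
      Multiset.map_map]
    refine ((leadingCoeff_ne_zero.mpr hp0).isUnit.map _).mul
      (IsUnit.multisetProd_iff.mpr ?_)
    simp only [Multiset.mem_map, Function.comp_apply, map_sub, aeval_X, aeval_C]
    rintro _ ⟨l, -, rfl⟩
    exact hunit' l
  exact not_isUnit_zero (hpc ▸ this)

namespace Derivation

theorem isUnit_or_eq_zero_of_apply_eq_zero {k A : Type*} [CommRing k] [CommRing A] [Algebra k A]
    (D : Derivation k A A)
    (hsimple : ∀ I : Ideal A, (∀ a ∈ I, D a ∈ I) → I = ⊥ ∨ I = ⊤) {c : A} (hc : D c = 0) :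
    IsUnit c ∨ c = 0 := by
  have hstable : ∀ a ∈ Ideal.span {c}, D a ∈ Ideal.span {c} := by
    intro a ha
    obtain ⟨b, rfl⟩ := Ideal.mem_span_singleton'.mp ha
    rw [D.leibniz, hc, smul_zero, zero_add, smul_eq_mul]
    exact Ideal.mul_mem_right _ _ (Ideal.mem_span_singleton_self c)
  rw [← Ideal.span_singleton_eq_top, ← Ideal.span_singleton_eq_bot]
  exact (hsimple _ hstable).symm

theorem exists_aeval_eq_of_iterate_eq_zero {k A : Type*} [Field k] [CharZero k] [CommRing A]
    [Algebra k A]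
    (D : Derivation k A A) (hker : ∀ c, D c = 0 → ∃ l : k, c = algebraMap k A l)
    {x : A} (hx : D x = 1) :
    ∀ (n : ℕ) (a : A), (⇑D)^[n] a = 0 → ∃ p : k[X], a = aeval x p := by
  intro n
  induction n with
  | zero => exact fun a ha => ⟨0, by simpa using ha⟩
  | succ n ih =>
    intro a ha
    obtain ⟨p, hp⟩ := ih (D a) ha
    obtain ⟨q, hq⟩ := derivative_surjective p
    obtain ⟨l, hl⟩ := hker (a - aeval x q) (by simp [map_sub, hx, hq, hp])
    exact ⟨q + C l, by rw [map_add, aeval_C, ← hl, add_sub_cancel]⟩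

end Derivation

theorem stmt6 (k : Type*) [Field k] [IsAlgClosed k] [CharZero k]
    (A : Type*) [CommRing A] [Nontrivial A] [Algebra k A]
    (δ : A →ₗ[k] A) (hleib : ∀ a b, δ (a * b) = δ a * b + a * δ b)
    (hln : ∀ a : A, ∃ n : ℕ, (⇑δ)^[n] a = 0)
    (hsimple : ∀ I : Ideal A, (∀ x ∈ I, δ x ∈ I) → I = ⊥ ∨ I = ⊤)
    (x : A) (hx : δ x = 1)
    (hker : ∀ c : A, δ c = 0 → IsAlgebraic k c) :
    (∀ a : A, ∃ p : Polynomial k, a = Polynomial.aeval x p) ∧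
    (∀ p : Polynomial k, δ (Polynomial.aeval x p) =
      Polynomial.aeval x (Polynomial.derivative p)) := by
  let D : Derivation k A A := .mk' δ fun a b => by rw [hleib, smul_eq_mul, smul_eq_mul]; ring
  have hker_eq : ∀ c, D c = 0 → ∃ l : k, c = algebraMap k A l := fun c hc =>
    exists_eq_algebraMap_of_isAlgebraic (hker c hc) fun l =>
      D.isUnit_or_eq_zero_of_apply_eq_zero hsimple (by simp [hc])
  refine ⟨fun a => ?_, fun p => ?_⟩
  · obtain ⟨n, hn⟩ := hln a
    exact D.exists_aeval_eq_of_iterate_eq_zero hker_eq hx n a hn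
  · calc δ (aeval x p) = aeval x (derivative p) • δ x := D.map_aeval p x
      _ = aeval x (derivative p) := by rw [hx, smul_eq_mul, mul_one]
end

section
/- Let A be an associative algebra with center Z(A), and let δ be a locally nilpotent derivation of A such that A is δ-simple. Then Z(A) is δ-stable, and Z(A) is δ-simple as a commutative algebra (for the restricted derivation). -/
/-!
A nonzero `δ`-stable ideal `S` of the centre contains, by local nilpotency, a nonzero central
constant `a` (the last nonzero term of `s, δ s, δ² s, …`). Since `a` is central and `δ a = 0`,
the ideal `a A` is `δ`-stable, so `δ`-simplicity of `A` makes `a` a unit; its inverse is again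
central, hence every central `z = (z a⁻¹) a` lies in `S`.
-/

theorem mem_center_of_leibniz {A : Type*} [Ring A] {δ : A → A}
    (hleib : ∀ a b, δ (a * b) = δ a * b + a * δ b) {z : A}
    (hz : z ∈ Set.center A) : δ z ∈ Set.center A := by
  rw [Semigroup.mem_center_iff] at hz ⊢
  intro g
  have h := hleib g z
  rw [hz g, hleib, hz (δ g), add_comm] at h
  exact (add_left_cancel h).symm

theorem exists_ne_zero_apply_eq_zero_of_iterate {α : Type*} [Zero α] {f : α → α} {S : Set α}
    (hS : ∀ s ∈ S, f s ∈ S) :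
    ∀ (n : ℕ) {s : α}, s ∈ S → s ≠ 0 → f^[n] s = 0 → ∃ a ∈ S, a ≠ 0 ∧ f a = 0
  | 0, _, _, hs0, hn => absurd hn hs0
  | n + 1, s, hsS, hs0, hn => by
    by_cases hfs : f s = 0
    · exact ⟨s, hsS, hs0, hfs⟩
    · exact exists_ne_zero_apply_eq_zero_of_iterate hS n (hS s hsS) hfs hn

namespace TwoSidedIdeal

variable {A : Type*} [Ring A]

def principalOfMemCenter (a : A) (ha : a ∈ Set.center A) : TwoSidedIdeal A :=
  mk' {x | ∃ c, x = a * c} ⟨0, (mul_zero a).symm⟩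
    (fun ⟨c, hc⟩ ⟨d, hd⟩ => ⟨c + d, by rw [hc, hd, mul_add]⟩)
    (fun ⟨c, hc⟩ => ⟨-c, by rw [hc, mul_neg]⟩)
    (fun {x _} ⟨c, hc⟩ => ⟨x * c, by
      rw [hc, ← mul_assoc, Semigroup.mem_center_iff.mp ha x, mul_assoc]⟩)
    (fun {_ y} ⟨c, hc⟩ => ⟨c * y, by rw [hc, mul_assoc]⟩)

theorem mem_principalOfMemCenter {a : A} {ha : a ∈ Set.center A} {x : A} :
    x ∈ principalOfMemCenter a ha ↔ ∃ c, x = a * c :=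
  mem_mk' _ _ _ _ _ _ x

end TwoSidedIdeal

theorem exists_mem_center_mul_eq_one_of_simple {A : Type*} [Ring A] {δ : A → A}
    (hleib : ∀ a b, δ (a * b) = δ a * b + a * δ b)
    (hsimple : ∀ I : TwoSidedIdeal A, (∀ x ∈ I, δ x ∈ I) → I = ⊥ ∨ I = ⊤)
    {a : A} (ha : a ∈ Set.center A) (ha0 : a ≠ 0) (hda : δ a = 0) :
    ∃ b ∈ Set.center A, b * a = 1 := by
  let I := TwoSidedIdeal.principalOfMemCenter a ha
  have hI : ∀ x ∈ I, δ x ∈ I := fun x hx => by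
    obtain ⟨c, rfl⟩ := TwoSidedIdeal.mem_principalOfMemCenter.mp hx
    exact TwoSidedIdeal.mem_principalOfMemCenter.mpr
      ⟨δ c, by rw [hleib, hda, zero_mul, zero_add]⟩
  rcases hsimple I hI with hbot | htop
  · have haI : a ∈ I := TwoSidedIdeal.mem_principalOfMemCenter.mpr ⟨1, (mul_one a).symm⟩
    exact absurd ((TwoSidedIdeal.mem_bot A).mp (hbot ▸ haI)) ha0
  obtain ⟨b, hb⟩ := TwoSidedIdeal.mem_principalOfMemCenter.mp (htop ▸ trivial : (1 : A) ∈ I)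
  have hba : b * a = 1 := by rw [Semigroup.mem_center_iff.mp ha b, hb]
  let u : Aˣ := ⟨a, b, hb.symm, hba⟩
  exact ⟨_, Set.units_inv_mem_center (a := u) ha, hba⟩

theorem stmt8_general (A : Type*) [Ring A]
    (δ : A → A)
    (hleib : ∀ a b, δ (a * b) = δ a * b + a * δ b)
    (hln : ∀ a : A, ∃ n : ℕ, δ^[n] a = 0)
    (hsimple : ∀ I : TwoSidedIdeal A, (∀ x ∈ I, δ x ∈ I) → I = ⊥ ∨ I = ⊤) :
    (∀ z ∈ Set.center A, δ z ∈ Set.center A) ∧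
    (∀ S : Set A, S ⊆ Set.center A →
      (0 : A) ∈ S → (∀ a b, a ∈ S → b ∈ S → a + b ∈ S) →
      (∀ z ∈ Set.center A, ∀ s ∈ S, z * s ∈ S) →
      (∀ s ∈ S, δ s ∈ S) →
      S = {0} ∨ S = Set.center A) := by
  refine ⟨fun _ => mem_center_of_leibniz hleib, fun S hSc h0 _ hmulS hdS => ?_⟩
  by_cases hS : ∃ s ∈ S, s ≠ 0
  · obtain ⟨s, hsS, hs0⟩ := hS
    obtain ⟨n, hn⟩ := hln s
    obtain ⟨a, haS, ha0, hda⟩ := exists_ne_zero_apply_eq_zero_of_iterate hdS n hsS hs0 hn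
    obtain ⟨b, hbC, hba⟩ := 
      exists_mem_center_mul_eq_one_of_simple hleib hsimple (hSc haS) ha0 hda
    refine Or.inr (hSc.antisymm fun z hz => ?_)
    simpa [mul_assoc, hba] using hmulS _ (Set.mul_mem_center hz hbC) a haS
  · push Not at hS
    exact Or.inl (Set.eq_singleton_iff_unique_mem.mpr ⟨h0, hS⟩)

/-- for a δ-simple algebra with δ locally nilpotent, the center is
δ-stable and δ-simple (as a commutative algebra, stated via subsets of the
center that are ideals of the center). -/
theorem stmt8 (A : Type*) [Ring A] [Nontrivial A]
    (δ : A → A) (hadd : ∀ a b, δ (a + b) = δ a + δ b)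
    (hleib : ∀ a b, δ (a * b) = δ a * b + a * δ b)
    (hln : ∀ a : A, ∃ n : ℕ, δ^[n] a = 0)
    (hsimple : ∀ I : TwoSidedIdeal A, (∀ x ∈ I, δ x ∈ I) → I = ⊥ ∨ I = ⊤) :
    (∀ z ∈ Set.center A, δ z ∈ Set.center A) ∧
    (∀ S : Set A, S ⊆ Set.center A →
      (0 : A) ∈ S → (∀ a b, a ∈ S → b ∈ S → a + b ∈ S) →
      (∀ z ∈ Set.center A, ∀ s ∈ S, z * s ∈ S) →
      (∀ s ∈ S, δ s ∈ S) →
      S = {0} ∨ S = Set.center A) :=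
  stmt8_general A δ hleib hln hsimple
end

section
/- Let A be an associative unital algebra, δ a derivation of A, and suppose A is δ-simple (no proper nonzero δ-stable two-sided ideals). If ker δ ⊆ Z(A) fails, still: any two-sided ideal I of the subalgebra A_0 = ker δ with A = Z(A)·A_0 and I generating a δ-stable ideal of A must be 0 or A_0; consequently, if A is δ-simple and A = Z(A)·A_0, then A_0 is a simple algebra or zero. -/
/-!
If `S ≠ 0`, the central span `Z(A)·S` is a δ-stable two-sided ideal of `A` (because
`A = Z(A)·A₀`), hence all of `A`. So each `b ∈ A₀` is a sum `∑ zᵢ sᵢ` with `zᵢ` central and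
`sᵢ ∈ S`, and it suffices to replace the `zᵢ` by central δ-constants, which lie in `A₀`.
Differentiating gives the relation `∑ δ(zᵢ) sᵢ = 0`. A relation with central coefficients can be
shortened, by the Wronskian-type combinations `δˡ(zⱼ) zᵢ - zⱼ δˡ(zᵢ)`, until all its coefficients
are constant multiples of one of them; this produces a nonzero constant relation. Since the
nonzero central constants are invertible, that relation eliminates one of the `sᵢ`, and induction
on the number of terms finishes.
-/

open Finset Function

section

variable {A : Type*} [Ring A]

/-- The paper's `Z(A)·S`. -/
def centralSpan (S : Set A) : AddSubgroup A :=
  AddSubgroup.closure {r | ∃ z ∈ Subring.center A, ∃ s ∈ S, r = z * s}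

def IsDiffSimple (δ : A →+ A) : Prop :=
  ∀ I : TwoSidedIdeal A, (∀ x ∈ I, δ x ∈ I) → I = ⊥ ∨ I = ⊤

theorem mul_mul_mul_comm_of_mem_center {z' : A} (hz' : z' ∈ Subring.center A) (z s t : A) :
    z * s * (z' * t) = z * z' * (s * t) := by
  rw [mul_assoc, ← mul_assoc s, Subring.mem_center_iff.1 hz' s, mul_assoc, ← mul_assoc]

theorem mul_mem_closure_of_forall {S T U : Set A}
    (h : ∀ x ∈ S, ∀ y ∈ T, x * y ∈ AddSubgroup.closure U) {x y : A}
    (hx : x ∈ AddSubgroup.closure S) (hy : y ∈ AddSubgroup.closure T) :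
    x * y ∈ AddSubgroup.closure U := by
  have hxT : ∀ y ∈ T, x * y ∈ AddSubgroup.closure U := fun y hy =>
    (AddSubgroup.closure_le ((AddSubgroup.closure U).comap (AddMonoidHom.mulRight y))).2
      (fun x' hx' => h x' hx' y hy) hx
  exact (AddSubgroup.closure_le ((AddSubgroup.closure U).comap (AddMonoidHom.mulLeft x))).2 hxT hy

theorem exists_sum_eq_of_mem_centralSpan {S : Set A} {x : A} (hx : x ∈ centralSpan S) :
    ∃ (t : Finset A) (z : A → A), ↑t ⊆ S ∧ (∀ a, z a ∈ Subring.center A) ∧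
      x = ∑ a ∈ t, z a * a := by
  have hle : centralSpan S ≤ (Submodule.span (Subring.center A) S).toAddSubgroup :=
    (AddSubgroup.closure_le _).2 <| by
      rintro _ ⟨z, hz, s, hs, rfl⟩
      exact Submodule.smul_mem _ (⟨z, hz⟩ : Subring.center A) (Submodule.subset_span hs)
  obtain ⟨f, t, hts, -, hsum⟩ := Submodule.mem_span_iff_exists_finset_subset.1 (hle hx)
  exact ⟨t, fun a => f a, hts, fun a => (f a).2, hsum.symm⟩

theorem sum_update_zero_mul {ι : Type*} [DecidableEq ι] (s : Finset ι) (c e : ι → A) (k : ι) :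
    ∑ i ∈ s, update c k 0 i * e i = ∑ i ∈ s.erase k, c i * e i := by
  rw [← sum_erase _ (by rw [update_self, zero_mul])]
  exact sum_congr rfl fun i hi => by rw [update_of_ne (ne_of_mem_erase hi)]

theorem sum_erase_sub_mul_eq {ι : Type*} [DecidableEq ι] {s : Finset ι} {c e : ι → A} {u : A}
    {k : ι} (hk : k ∈ s) (hu : u * c k = 1) (hc : ∑ i ∈ s, c i * e i = 0) (z : ι → A) :
    ∑ i ∈ s.erase k, (z i - z k * u * c i) * e i = ∑ i ∈ s, z i * e i := by
  have hck : ∑ i ∈ s.erase k, c i * e i = -(c k * e k) :=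
    eq_neg_of_add_eq_zero_left (by rwa [sum_erase_add _ _ hk])
  simp only [sub_mul, sum_sub_distrib, mul_assoc, ← mul_sum, hck]
  rw [mul_neg, mul_neg, sub_neg_eq_add, ← mul_assoc u, hu, one_mul, sum_erase_add _ _ hk]

variable {δ : A →+ A}

theorem map_one_of_leibniz (hδ : ∀ a b, δ (a * b) = δ a * b + a * δ b) : δ 1 = 0 := by
  simpa using hδ 1 1

theorem map_mem_center_of_leibniz (hδ : ∀ a b, δ (a * b) = δ a * b + a * δ b) {z : A}
    (hz : z ∈ Subring.center A) : δ z ∈ Subring.center A := by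
  refine Subring.mem_center_iff.2 fun g => ?_
  have h := congrArg δ (Subring.mem_center_iff.1 hz g)
  rw [hδ, hδ, Subring.mem_center_iff.1 hz (δ g), add_comm (z * δ g)] at h
  exact add_right_cancel h

theorem iterate_map_mem_center (hδ : ∀ a b, δ (a * b) = δ a * b + a * δ b) {z : A}
    (hz : z ∈ Subring.center A) (k : ℕ) : δ^[k] z ∈ Subring.center A := by
  induction k with
  | zero => exact hz
  | succ k ih => exact iterate_succ_apply' δ k z ▸ map_mem_center_of_leibniz hδ ih

theorem sum_iterate_mul_eq_zero (hδ : ∀ a b, δ (a * b) = δ a * b + a * δ b) {ι : Type*}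
    {s : Finset ι} {z e : ι → A} (he : ∀ i ∈ s, δ (e i) = 0) (hrel : ∑ i ∈ s, z i * e i = 0)
    (k : ℕ) : ∑ i ∈ s, δ^[k] (z i) * e i = 0 := by
  induction k with
  | zero => simpa using hrel
  | succ k ih =>
    rw [← map_zero δ, ← ih, map_sum]
    exact sum_congr rfl fun i hi => by rw [hδ, he i hi, mul_zero, add_zero, iterate_succ_apply']

theorem IsDiffSimple.forall_mem (hs : IsDiffSimple δ) {P : Set A} (zero_mem : 0 ∈ P)
    (add_mem : ∀ {x y}, x ∈ P → y ∈ P → x + y ∈ P) (neg_mem : ∀ {x}, x ∈ P → -x ∈ P)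
    (mul_mem_left : ∀ {x y}, y ∈ P → x * y ∈ P) (mul_mem_right : ∀ {x y}, x ∈ P → x * y ∈ P)
    (map_mem : ∀ x ∈ P, δ x ∈ P) {x : A} (hx : x ∈ P) (hx0 : x ≠ 0) (y : A) : y ∈ P := by
  let I := TwoSidedIdeal.mk' P zero_mem add_mem neg_mem mul_mem_left mul_mem_right
  have hmem (y : A) : y ∈ I ↔ y ∈ P := TwoSidedIdeal.mem_mk' _ _ _ _ _ _ y
  have hbot : I ≠ ⊥ := fun h => hx0 (by rwa [← hmem, h, TwoSidedIdeal.mem_bot] at hx)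
  have htop := (hs I fun y hy => (hmem _).2 (map_mem y ((hmem y).1 hy))).resolve_left hbot
  exact (hmem y).1 (htop ▸ TwoSidedIdeal.mem_top A)

theorem eq_zero_of_forall_iterate_mul_eq_zero (hδ : ∀ a b, δ (a * b) = δ a * b + a * δ b)
    (hs : IsDiffSimple δ) {z y : A} (hz : z ∈ Subring.center A) (hz0 : z ≠ 0)
    (hy : ∀ l, δ^[l] z * y = 0) : y = 0 := by
  by_contra hy0
  have h1 := hs.forall_mem (P := {y | ∀ l, δ^[l] z * y = 0}) (fun l => mul_zero _)
    (fun ha hb l => by rw [mul_add, ha l, hb l, add_zero])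
    (fun ha l => by rw [mul_neg, ha l, neg_zero])
    (fun {a _} hb l => by
      rw [← mul_assoc, ← Subring.mem_center_iff.1 (iterate_map_mem_center hδ hz l) a, mul_assoc,
        hb l, mul_zero])
    (fun ha l => by rw [← mul_assoc, ha l, zero_mul])
    (fun x hx l => by
      have h := congrArg δ (hx l)
      rwa [hδ, ← iterate_succ_apply' δ, hx (l + 1), zero_add, map_zero] at h)
    hy hy0 1 0
  exact hz0 (by simpa using h1)

theorem exists_forall_iterate_mul_eq (hδ : ∀ a b, δ (a * b) = δ a * b + a * δ b)
    (hs : IsDiffSimple δ) {z w : A} (hz : z ∈ Subring.center A) (hw : w ∈ Subring.center A)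
    (hz0 : z ≠ 0) (hzw : ∀ l, δ^[l] z * w = z * δ^[l] w) :
    ∃ g, ∀ l, δ^[l] z * g = δ^[l] w := by
  have hcomm (l : ℕ) (a : A) := Subring.mem_center_iff.1 (iterate_map_mem_center hδ hz l) a
  have hcomm' (l : ℕ) (a : A) := Subring.mem_center_iff.1 (iterate_map_mem_center hδ hw l) a
  have h1 := hs.forall_mem (P := {x | ∃ y, ∀ l, δ^[l] z * y = δ^[l] w * x})
    ⟨0, fun l => by rw [mul_zero, mul_zero]⟩
    (fun ⟨y, hy⟩ ⟨y', hy'⟩ => ⟨y + y', fun l => by rw [mul_add, mul_add, hy l, hy' l]⟩)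
    (fun ⟨y, hy⟩ => ⟨-y, fun l => by rw [mul_neg, mul_neg, hy l]⟩)
    (fun {a _} ⟨y, hy⟩ => ⟨a * y, fun l => by
      rw [← mul_assoc, ← hcomm, mul_assoc, hy l, ← mul_assoc, hcomm', mul_assoc]⟩)
    (fun {_ b} ⟨y, hy⟩ => ⟨y * b, fun l => by rw [← mul_assoc, hy l, mul_assoc]⟩)
    (fun x ⟨y, hy⟩ => ⟨δ y, fun l => by
      have h := congrArg δ (hy l)
      rwa [hδ, hδ, ← iterate_succ_apply' δ, ← iterate_succ_apply' δ, hy (l + 1),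
        add_right_inj] at h⟩)
    ⟨w, fun l => by rw [hzw l, hcomm']⟩ hz0 1
  obtain ⟨g, hg⟩ := h1
  exact ⟨g, fun l => by rw [hg l, mul_one]⟩

theorem exists_const_forall_iterate_mul_eq (hδ : ∀ a b, δ (a * b) = δ a * b + a * δ b)
    (hs : IsDiffSimple δ) {z w : A} (hz : z ∈ Subring.center A) (hw : w ∈ Subring.center A)
    (hz0 : z ≠ 0) (hzw : ∀ l, δ^[l] z * w = z * δ^[l] w) :
    ∃ g, (g ∈ Subring.center A ∧ δ g = 0) ∧ ∀ l, δ^[l] z * g = δ^[l] w := by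
  obtain ⟨g, hg⟩ := exists_forall_iterate_mul_eq hδ hs hz hw hz0 hzw
  refine ⟨g, ⟨Subring.mem_center_iff.2 fun x => ?_, ?_⟩, hg⟩
  · refine (sub_eq_zero.1 (eq_zero_of_forall_iterate_mul_eq_zero hδ hs hz hz0 fun l => ?_)).symm
    have hcomm := Subring.mem_center_iff.1 (iterate_map_mem_center hδ hz l) x
    rw [mul_sub, ← mul_assoc, hg, ← mul_assoc, ← hcomm, mul_assoc, hg,
      Subring.mem_center_iff.1 (iterate_map_mem_center hδ hw l), sub_self]
  · refine eq_zero_of_forall_iterate_mul_eq_zero hδ hs hz hz0 fun l => ?_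
    have h := congrArg δ (hg l)
    rwa [hδ, ← iterate_succ_apply' δ, ← iterate_succ_apply' δ, ← hg (l + 1), add_eq_left] at h

theorem exists_const_inv (hδ : ∀ a b, δ (a * b) = δ a * b + a * δ b) (hs : IsDiffSimple δ)
    {c : A} (hc : c ∈ Subring.center A) (hδc : δ c = 0) (hc0 : c ≠ 0) :
    ∃ u, (u ∈ Subring.center A ∧ δ u = 0) ∧ u * c = 1 := by
  have hsym : ∀ l, δ^[l] c * 1 = c * δ^[l] 1
    | 0 => by simp
    | l + 1 => by simp [iterate_succ_apply, hδc, map_one_of_leibniz hδ]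
  obtain ⟨u, hu, hcu⟩ := exists_const_forall_iterate_mul_eq hδ hs hc (one_mem _) hc0 hsym
  exact ⟨u, hu, by rw [Subring.mem_center_iff.1 hc u]; exact hcu 0⟩

theorem exists_const_relation (hδ : ∀ a b, δ (a * b) = δ a * b + a * δ b) (hs : IsDiffSimple δ)
    {ι : Type*} [DecidableEq ι] {s : Finset ι} {z e : ι → A} {j : ι} (hj : j ∈ s) (hzj : z j ≠ 0)
    (hz : ∀ i ∈ s, z i ∈ Subring.center A) (he : ∀ i ∈ s, δ (e i) = 0)
    (hrel : ∑ i ∈ s, z i * e i = 0) :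
    ∃ c : ι → A, (∀ i ∈ s, c i ∈ Subring.center A ∧ δ (c i) = 0) ∧ (∃ i ∈ s, c i ≠ 0) ∧
      ∑ i ∈ s, c i * e i = 0 := by
  induction s using Finset.strongInduction generalizing z j with
  | H s ih =>
  -- Either every `z m` is a constant multiple of `z j`, or some `W` below is a shorter relation.
  by_cases hprop : ∀ l, ∀ m ∈ s, δ^[l] (z j) * z m = z j * δ^[l] (z m)
  · choose! g hgC hg using fun m hm =>
      exists_const_forall_iterate_mul_eq hδ hs (hz j hj) (hz m hm) hzj (hprop · m hm)
    refine ⟨g, hgC, ⟨j, hj, fun hgj => hzj ?_⟩, ?_⟩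
    · simpa [hgj] using (hg j hj 0).symm
    refine eq_zero_of_forall_iterate_mul_eq_zero hδ hs (hz j hj) hzj fun l => ?_
    rw [mul_sum, ← sum_iterate_mul_eq_zero hδ he hrel l]
    exact sum_congr rfl fun i hi => by rw [← mul_assoc, hg i hi l]
  push Not at hprop
  obtain ⟨l, m, hm, hne⟩ := hprop
  set W : ι → A := fun i => δ^[l] (z j) * z i - z j * δ^[l] (z i) with hW
  have hWj : W j = 0 := by
    simp only [hW, Subring.mem_center_iff.1 (hz j hj), sub_self]
  have hWm : W m ≠ 0 := sub_ne_zero.2 hne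
  have hWC : ∀ i ∈ s, W i ∈ Subring.center A := fun i hi =>
    sub_mem (mul_mem (iterate_map_mem_center hδ (hz j hj) l) (hz i hi))
      (mul_mem (hz j hj) (iterate_map_mem_center hδ (hz i hi) l))
  have hWrel : ∑ i ∈ s.erase j, W i * e i = 0 := by
    rw [sum_erase _ (by rw [hWj, zero_mul])]
    simp only [hW, sub_mul, sum_sub_distrib, mul_assoc, ← mul_sum, hrel,
      sum_iterate_mul_eq_zero hδ he hrel l, mul_zero, sub_zero]
  obtain ⟨c, hcC, ⟨k, hk, hck⟩, hc⟩ := ih (s.erase j) (erase_ssubset hj)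
    (mem_erase.2 ⟨ne_of_apply_ne W (by rwa [hWj]), hm⟩) hWm
    (fun i hi => hWC i (mem_of_mem_erase hi)) (fun i hi => he i (mem_of_mem_erase hi)) hWrel
  refine ⟨update c j 0, fun i hi => ?_, ⟨k, mem_of_mem_erase hk, ?_⟩,
    by rw [sum_update_zero_mul, hc]⟩
  · rcases eq_or_ne i j with rfl | hij
    · simp [zero_mem]
    · rw [update_of_ne hij]
      exact hcC i (mem_erase.2 ⟨hij, hi⟩)
  · rwa [update_of_ne (ne_of_mem_erase hk)]

theorem exists_const_sum_eq (hδ : ∀ a b, δ (a * b) = δ a * b + a * δ b) (hs : IsDiffSimple δ)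
    {ι : Type*} [DecidableEq ι] {s : Finset ι} {z e : ι → A}
    (hz : ∀ i ∈ s, z i ∈ Subring.center A) (he : ∀ i ∈ s, δ (e i) = 0)
    (hb : δ (∑ i ∈ s, z i * e i) = 0) :
    ∃ c : ι → A, (∀ i ∈ s, c i ∈ Subring.center A ∧ δ (c i) = 0) ∧
      ∑ i ∈ s, z i * e i = ∑ i ∈ s, c i * e i := by
  induction s using Finset.strongInduction generalizing z with
  | H s ih =>
  by_cases hconst : ∀ i ∈ s, δ (z i) = 0
  · exact ⟨z, fun i hi => ⟨hz i hi, hconst i hi⟩, rfl⟩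
  push Not at hconst
  obtain ⟨j, hj, hzj⟩ := hconst
  have hrel : ∑ i ∈ s, δ (z i) * e i = 0 := by
    rw [← hb, map_sum]
    exact sum_congr rfl fun i hi => by rw [hδ, he i hi, mul_zero, add_zero]
  obtain ⟨c, hcC, ⟨k, hk, hck⟩, hc⟩ := exists_const_relation hδ hs hj hzj
    (fun i hi => map_mem_center_of_leibniz hδ (hz i hi)) he hrel
  obtain ⟨u, huC, hu⟩ := exists_const_inv hδ hs (hcC k hk).1 (hcC k hk).2 hck
  have hsum := sum_erase_sub_mul_eq hk hu hc z
  obtain ⟨c', hc'C, hc'⟩ := ih (s.erase k) (erase_ssubset hk)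
    (fun i hi => sub_mem (hz i (mem_of_mem_erase hi))
      (mul_mem (mul_mem (hz k hk) huC.1) (hcC i (mem_of_mem_erase hi)).1))
    (fun i hi => he i (mem_of_mem_erase hi)) (by rwa [hsum])
  refine ⟨update c' k 0, fun i hi => ?_, by rw [sum_update_zero_mul, ← hc', hsum]⟩
  rcases eq_or_ne i k with rfl | hik
  · simp [zero_mem]
  · rw [update_of_ne hik]
    exact hc'C i (mem_erase.2 ⟨hik, hi⟩)

theorem mem_of_mem_centralSpan (hδ : ∀ a b, δ (a * b) = δ a * b + a * δ b)
    (hs : IsDiffSimple δ) {S : Set A} (hS : S ⊆ {b | δ b = 0}) (hS0 : 0 ∈ S)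
    (hSadd : ∀ a b, a ∈ S → b ∈ S → a + b ∈ S) (hSmul : ∀ c, δ c = 0 → ∀ s ∈ S, c * s ∈ S)
    {b : A} (hb : δ b = 0) (hbS : b ∈ centralSpan S) : b ∈ S := by
  classical
  obtain ⟨t, z, hts, hz, rfl⟩ := exists_sum_eq_of_mem_centralSpan hbS
  obtain ⟨c, hc, hsum⟩ := exists_const_sum_eq hδ hs (fun a _ => hz a) (fun a ha => hS (hts ha)) hb
  rw [hsum]
  exact sum_induction _ (· ∈ S) hSadd hS0 fun a ha => hSmul _ (hc a ha).2 a (hts ha)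

theorem mem_centralSpan_of_ne_zero (hδ : ∀ a b, δ (a * b) = δ a * b + a * δ b)
    (hs : IsDiffSimple δ) (hdecomp : ∀ a : A, a ∈ centralSpan {b | δ b = 0}) {S : Set A}
    (hS : S ⊆ {b | δ b = 0}) (hSmul : ∀ c, δ c = 0 → ∀ s ∈ S, c * s ∈ S ∧ s * c ∈ S)
    {s₀ : A} (hs₀ : s₀ ∈ S) (hs₀0 : s₀ ≠ 0) (a : A) : a ∈ centralSpan S := by
  refine hs.forall_mem (P := centralSpan S) (zero_mem _) add_mem neg_mem
    (fun {x _} hy => mul_mem_closure_of_forall ?_ (hdecomp x) hy)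
    (fun {_ y} hx => mul_mem_closure_of_forall ?_ hx (hdecomp y))
    (fun x hx => (AddSubgroup.closure_le ((centralSpan S).comap δ)).2 ?_ hx)
    (AddSubgroup.subset_closure ⟨1, one_mem _, s₀, hs₀, (one_mul s₀).symm⟩) hs₀0 a
  · rintro _ ⟨z, hz, c, hc, rfl⟩ _ ⟨z', hz', s, hs, rfl⟩
    rw [mul_mul_mul_comm_of_mem_center hz']
    exact AddSubgroup.subset_closure ⟨z * z', mul_mem hz hz', c * s, (hSmul c hc s hs).1, rfl⟩
  · rintro _ ⟨z, hz, s, hs, rfl⟩ _ ⟨z', hz', c, hc, rfl⟩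
    rw [mul_mul_mul_comm_of_mem_center hz']
    exact AddSubgroup.subset_closure ⟨z * z', mul_mem hz hz', s * c, (hSmul c hc s hs).2, rfl⟩
  · rintro _ ⟨z, hz, s, hs, rfl⟩
    refine AddSubgroup.subset_closure ⟨δ z, map_mem_center_of_leibniz hδ hz, s, hs, ?_⟩
    rw [hδ, hS hs, mul_zero, add_zero]

end

theorem stmt9_general (A : Type*) [Ring A]
    (δ : A → A) (hadd : ∀ a b, δ (a + b) = δ a + δ b)
    (hleib : ∀ a b, δ (a * b) = δ a * b + a * δ b)
    (hsimple : ∀ I : TwoSidedIdeal A, (∀ x ∈ I, δ x ∈ I) → I = ⊥ ∨ I = ⊤)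
    (hdecomp : ∀ a : A, a ∈ AddSubgroup.closure
      {r : A | ∃ z ∈ Set.center A, ∃ b : A, δ b = 0 ∧ r = z * b}) :
    ∀ S : Set A, S ⊆ {b : A | δ b = 0} →
      (0 : A) ∈ S → (∀ a b, a ∈ S → b ∈ S → a + b ∈ S) →
      (∀ a, a ∈ S → -a ∈ S) →
      (∀ c : A, δ c = 0 → ∀ s ∈ S, c * s ∈ S ∧ s * c ∈ S) →
      S = {0} ∨ S = {b : A | δ b = 0} := by
  intro S hS hS0 hSadd _ hSmul
  let D : A →+ A := AddMonoidHom.mk' δ hadd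
  by_cases hzero : ∀ s ∈ S, s = 0
  · exact Or.inl (Set.eq_singleton_iff_unique_mem.2 ⟨hS0, hzero⟩)
  push Not at hzero
  obtain ⟨s₀, hs₀, hs₀0⟩ := hzero
  refine Or.inr (hS.antisymm fun b hb => ?_)
  exact mem_of_mem_centralSpan (δ := D) hleib hsimple hS hS0 hSadd
    (fun c hc s hs => (hSmul c hc s hs).1) hb
    (mem_centralSpan_of_ne_zero (δ := D) hleib hsimple hdecomp hS hSmul hs₀ hs₀0 b)

/-- if `A` is δ-simple and `A = Z(A)·A₀` where `A₀ = ker δ`, then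
every two-sided ideal of the subalgebra `A₀` is `0` or `A₀` (so `A₀` is simple). -/
theorem stmt9 (A : Type*) [Ring A] [Nontrivial A]
    (δ : A → A) (hadd : ∀ a b, δ (a + b) = δ a + δ b)
    (hleib : ∀ a b, δ (a * b) = δ a * b + a * δ b)
    (hsimple : ∀ I : TwoSidedIdeal A, (∀ x ∈ I, δ x ∈ I) → I = ⊥ ∨ I = ⊤)
    (hdecomp : ∀ a : A, a ∈ AddSubgroup.closure
      {r : A | ∃ z ∈ Set.center A, ∃ b : A, δ b = 0 ∧ r = z * b}) :
    ∀ S : Set A, S ⊆ {b : A | δ b = 0} →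
      (0 : A) ∈ S → (∀ a b, a ∈ S → b ∈ S → a + b ∈ S) →
      (∀ a, a ∈ S → -a ∈ S) →
      (∀ c : A, δ c = 0 → ∀ s ∈ S, c * s ∈ S ∧ s * c ∈ S) →
      S = {0} ∨ S = {b : A | δ b = 0} :=
  stmt9_general A δ hadd hleib hsimple hdecomp
end

section
/- Let A be a commutative algebra of transcendence degree 1 over an algebraically closed field k of characteristic zero, with a locally nilpotent derivation δ making A δ-simple. Suppose x, y ∈ A are transcendental over k with δ(x) = 1 and δ(y) = 0. Then x and y cannot both exist: any algebraic dependence relation of y over k[x] of minimal x-degree yields, by applying δ, a relation of smaller x-degree, forcing y to be algebraic over k, a contradiction. -/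
/-!
A derivation `D` with `D x = 1` is linear over its constants, and it differentiates `p(x)` to
`p'(x)` for every polynomial `p` with constant coefficients. Applying it `deg p` times to a
relation `p(x) = 0` leaves `(deg p)! · lc(p) = 0`, so in characteristic zero no such relation
exists: `x` is transcendental over the constants, in particular over `k[y]`. Together with
`y` transcendental over `k` this makes `x, y` algebraically independent over `k`, contradicting
transcendence degree one.
-/
open Polynomial

namespace Derivation

section Transcendence

variable {S A : Type*} [CommRing S] [CommRing A] [Algebra S A] (D : Derivation S A A) {x : A}

theorem aeval_iterate_derivative_eq_zero (hx : D x = 1) {p : S[X]} (hp : aeval x p = 0)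
    (n : ℕ) : aeval x (derivative^[n] p) = 0 := by
  induction n with
  | zero => exact hp
  | succ n ih =>
    rw [Function.iterate_succ_apply', ← mul_one (aeval x _), ← hx, ← smul_eq_mul, ← D.map_aeval,
      ih, map_zero]

theorem transcendental_of_apply_eq_one [FaithfulSMul S A] [IsAddTorsionFree A] (hx : D x = 1) :
    Transcendental S x := by
  rw [transcendental_iff_injective, injective_iff_map_eq_zero]
  intro p hp
  set n := p.natDegree
  have hconst : derivative^[n] p = C (n.factorial • p.leadingCoeff) := by
    rw [eq_C_of_natDegree_le_zero ((natDegree_iterate_derivative p n).trans (Nat.sub_self n).le),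
      coeff_iterate_derivative, zero_add, Nat.descFactorial_self]
    rfl
  have h := D.aeval_iterate_derivative_eq_zero hx hp n
  rw [hconst, aeval_C, map_nsmul] at h
  have hlc : algebraMap S A p.leadingCoeff = 0 :=
    (smul_eq_zero.mp h).resolve_left n.factorial_ne_zero
  exact leadingCoeff_eq_zero.mp <|
    (map_eq_zero_iff _ (FaithfulSMul.algebraMap_injective S A)).mp hlc

end Transcendence

variable {R A : Type*} [CommRing R] [CommRing A] [Algebra R A]

def extendScalars (D : Derivation R A A) (B : Subalgebra R A) (hB : ∀ b ∈ B, D b = 0) :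
    Derivation B A A :=
  .mk'
    { toFun := D
      map_add' := D.map_add
      map_smul' := fun b a => by
        rw [Subalgebra.smul_def, smul_eq_mul, D.leibniz, hB b b.2, smul_zero, add_zero]
        rfl }
    fun a b => D.leibniz a b

end Derivation

theorem algebraicIndependent_pair {R A : Type*} [CommRing R] [CommRing A] [Algebra R A] {x y : A}
    (hy : Transcendental R y) (hx : Transcendental (Algebra.adjoin R {y}) x) :
    AlgebraicIndependent R ![x, y] := by
  refine (AlgebraicIndependent.iff_transcendental_adjoin_image 0).mpr ⟨?_, ?_⟩
  · have : Subsingleton {j : Fin 2 // j ≠ 0} :=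
      ⟨fun i j => Subtype.ext <|
        (Fin.eq_one_of_ne_zero _ i.2).trans (Fin.eq_one_of_ne_zero _ j.2).symm⟩
    exact (algebraicIndependent_singleton_iff (⟨1, one_ne_zero⟩ : {j : Fin 2 // j ≠ 0})).mpr hy
  · have himage : ![x, y] '' {0}ᶜ = {y} := by
      ext; simp [Fin.exists_fin_two, eq_comm]
    rwa [himage]

theorem stmt14_general (k : Type*) [Field k] [CharZero k]
    (A : Type*) [CommRing A] [Algebra k A]
    (δ : A →ₗ[k] A) (hleib : ∀ a b, δ (a * b) = δ a * b + a * δ b)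
    (htd : ∀ a b : A, ∃ p : MvPolynomial (Fin 2) k, p ≠ 0 ∧
      MvPolynomial.aeval ![a, b] p = 0)
    (x y : A) (hyt : ¬ IsAlgebraic k y)
    (hx : δ x = 1) (hy : δ y = 0) :
    False := by
  let D : Derivation k A A := .mk' δ fun a b => by rw [hleib, smul_eq_mul, smul_eq_mul]; ring
  have hDy : ∀ b ∈ Algebra.adjoin k {y}, D b = 0 := fun b hb =>
    D.eqOn_adjoin (D2 := 0) (by simpa [D] using hy) hb
  have : IsAddTorsionFree A := .of_isTorsionFree k A
  have hxt : Transcendental (Algebra.adjoin k {y}) x :=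
    (D.extendScalars _ hDy).transcendental_of_apply_eq_one hx
  obtain ⟨p, hp0, hp⟩ := htd x y
  exact hp0 ((algebraicIndependent_iff_injective_aeval.mp (algebraicIndependent_pair hyt hxt))
    (by rw [hp, map_zero]))

/-- in a δ-simple commutative algebra of transcendence degree 1
(any two elements are algebraically dependent) with δ locally nilpotent, there
cannot exist transcendental elements `x`, `y` with `δ x = 1` and `δ y = 0`. -/
theorem stmt14 (k : Type*) [Field k] [IsAlgClosed k] [CharZero k]
    (A : Type*) [CommRing A] [Nontrivial A] [Algebra k A]
    (δ : A →ₗ[k] A) (hleib : ∀ a b, δ (a * b) = δ a * b + a * δ b)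
    (hln : ∀ a : A, ∃ n : ℕ, (⇑δ)^[n] a = 0)
    (hsimple : ∀ I : Ideal A, (∀ x ∈ I, δ x ∈ I) → I = ⊥ ∨ I = ⊤)
    (htd : ∀ a b : A, ∃ p : MvPolynomial (Fin 2) k, p ≠ 0 ∧
      MvPolynomial.aeval ![a, b] p = 0)
    (x y : A) (hxt : ¬ IsAlgebraic k x) (hyt : ¬ IsAlgebraic k y)
    (hx : δ x = 1) (hy : δ y = 0) :
    False :=
  stmt14_general k A δ hleib htd x y hyt hx hy
end
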